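/- arXiv:1608.07026 — 6 statements merged into one kernel-verified Lean document; each statement's English description precedes it below -/
import Mathlib

section
/- Let p, C be real numbers with p > 0 and C > 0, let ω₀ > 0 satisfy ω₀⁴ + p²ω₀² = C², and for a natural number n set τₙ = (arccos(ω₀²/C) + 2nπ)/ω₀. Then λ = iω₀ satisfies λ² + pλ + C e^{−λτₙ} = 0, i.e., the characteristic equation has a purely imaginary root at every delay value τₙ. -/
open Real

theorem I_mul_isRoot_charEq_of_cos_sin {p C ω τ : ℝ} (hcos : C * cos (ω * τ) = ω ^ 2)
    (hsin : C * sin (ω * τ) = p * ω) :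
    (Complex.I * ω) ^ 2 + p * (Complex.I * ω) + C * Complex.exp (-(Complex.I * ω) * τ) = 0 := by
  have hexp : Complex.exp (-(Complex.I * ω) * τ) = cos (ω * τ) - sin (ω * τ) * Complex.I := by
    rw [show -(Complex.I * ω) * τ = ((-(ω * τ) : ℝ) : ℂ) * Complex.I by push_cast; ring,
      Complex.exp_mul_I, ← Complex.ofReal_cos, ← Complex.ofReal_sin, cos_neg, sin_neg]
    push_cast
    ring
  have hcos' : (C : ℂ) * cos (ω * τ) = ω ^ 2 := by exact_mod_cast hcos
  have hsin' : (C : ℂ) * sin (ω * τ) = p * ω := by exact_mod_cast hsin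
  rw [hexp]
  linear_combination hcos' - Complex.I * hsin' + (ω : ℂ) ^ 2 * Complex.I_sq

theorem mul_cos_arccos_div {a C : ℝ} (hC : 0 < C) (ha : |a| ≤ C) :
    C * cos (arccos (a / C)) = a := by
  obtain ⟨hlo, hhi⟩ := abs_le.mp ha
  rw [cos_arccos ((le_div_iff₀ hC).mpr (by linarith)) ((div_le_one hC).mpr hhi)]
  field_simp

theorem mul_sin_arccos_div {a C : ℝ} (hC : 0 < C) :
    C * sin (arccos (a / C)) = √(C ^ 2 - a ^ 2) := by
  rw [sin_arccos]
  nth_rw 1 [← sqrt_sq hC.le]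
  rw [← sqrt_mul (sq_nonneg C)]
  congr 1
  field_simp

/-- At every critical delay τₙ = (arccos(ω₀²/C) + 2nπ)/ω₀ the characteristic
equation λ² + pλ + C e^{−λτ} = 0 has the purely imaginary root λ = iω₀. -/
theorem stmt_10 (p C ω₀ : ℝ) (n : ℕ) (hp : 0 < p) (hC : 0 < C) (hω : 0 < ω₀)
    (hroot : ω₀ ^ 4 + p ^ 2 * ω₀ ^ 2 = C ^ 2)
    (τn : ℝ) (hτn : τn = (Real.arccos (ω₀ ^ 2 / C) + 2 * n * Real.pi) / ω₀) :
    (Complex.I * (ω₀ : ℂ)) ^ 2 + (p : ℂ) * (Complex.I * (ω₀ : ℂ)) +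
      (C : ℂ) * Complex.exp (-(Complex.I * (ω₀ : ℂ)) * (τn : ℂ)) = 0 := by
  have hωτ : ω₀ * τn = arccos (ω₀ ^ 2 / C) + n * (2 * π) := by
    rw [hτn]
    field_simp
  have hωC : |ω₀ ^ 2| ≤ C := by
    rw [abs_of_nonneg (sq_nonneg ω₀)]
    nlinarith [sq_nonneg (p * ω₀)]
  apply I_mul_isRoot_charEq_of_cos_sin
  · rw [hωτ, cos_add_nat_mul_two_pi, mul_cos_arccos_div hC hωC]
  · rw [hωτ, sin_add_nat_mul_two_pi, mul_sin_arccos_div hC,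
      show C ^ 2 - (ω₀ ^ 2) ^ 2 = (p * ω₀) ^ 2 by linarith, sqrt_sq (by positivity)]
end

section
/- Let p, C be real numbers with p > 0 and C > 0, let ω₀ > 0 be the unique positive root of ω⁴ + p²ω² − C² = 0, and set τ₂₀ = arccos(ω₀²/C)/ω₀. Then for every real τ with 0 ≤ τ < τ₂₀, the equation λ² + pλ + C e^{−λτ} = 0 has no root λ on the imaginary axis (i.e., no root with Re λ = 0). -/
/-!
On the imaginary axis `z = iy` the characteristic equation splits into `C cos(yτ) = y²` and
`C sin(yτ) = p y`. Squaring and adding gives `y⁴ + p²y² = C²`, whose only positive root is `ω₀`,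
so `|y| = ω₀` and `cos(ω₀τ) = ω₀²/C`. But `cos` is strictly decreasing on `[0, π]`, so
`cos(ω₀τ) > cos(arccos(ω₀²/C)) = ω₀²/C` as long as `0 ≤ ω₀τ < arccos(ω₀²/C)`.
-/

open Complex

lemma Real.lt_cos_of_lt_arccos {a x : ℝ} (hx₀ : 0 ≤ x) (hx : x < Real.arccos a) :
    a < Real.cos x := by
  rcases lt_or_ge a (-1) with ha | ha
  · linarith [Real.neg_one_le_cos x]
  have ha₁ : a < 1 := Real.arccos_pos.mp (hx₀.trans_lt hx)
  calc a = Real.cos (Real.arccos a) := (Real.cos_arccos ha ha₁.le).symm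
    _ < Real.cos x := Real.cos_lt_cos_of_nonneg_of_le_pi hx₀ (Real.arccos_le_pi a) hx

lemma cos_sin_eq_of_root_mul_I {p C τ y : ℝ}
    (h : ((y : ℂ) * I) ^ 2 + p * (y * I) + C * exp (-(y * I) * τ) = 0) :
    C * Real.cos (y * τ) = y ^ 2 ∧ C * Real.sin (y * τ) = p * y := by
  have hre := congrArg Complex.re h
  have him := congrArg Complex.im h
  simp only [pow_two, neg_mul, add_re, mul_re, ofReal_re, I_re, mul_zero, ofReal_im, I_im, mul_one,
    sub_self, mul_im, add_zero, zero_sub, zero_mul, exp_re, neg_re, neg_zero, Real.exp_zero, neg_im,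
    zero_add, Real.cos_neg, one_mul, exp_im, Real.sin_neg, mul_neg, sub_zero, zero_re, add_im,
    zero_im] at hre him
  exact ⟨by linear_combination hre, by linear_combination -him⟩

lemma quartic_eq_of_cos_sin_eq {p C θ y : ℝ} (hcos : C * Real.cos θ = y ^ 2)
    (hsin : C * Real.sin θ = p * y) : y ^ 4 + p ^ 2 * y ^ 2 = C ^ 2 := by
  linear_combination (-(C * Real.cos θ + y ^ 2)) * hcos +
    (-(C * Real.sin θ + p * y)) * hsin + C ^ 2 * Real.sin_sq_add_cos_sq θ

lemma sq_eq_sq_of_quartic_eq {p y ω : ℝ}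
    (h : y ^ 4 + p ^ 2 * y ^ 2 = ω ^ 4 + p ^ 2 * ω ^ 2) : y ^ 2 = ω ^ 2 := by
  have hfac : (y ^ 2 - ω ^ 2) * (y ^ 2 + ω ^ 2 + p ^ 2) = 0 := by linear_combination h
  rcases mul_eq_zero.mp hfac with hdiff | hsum
  · linarith
  · nlinarith [sq_nonneg y, sq_nonneg ω, sq_nonneg p]

theorem stmt_11_general (p C ω₀ : ℝ) (hC : 0 < C) (hω : 0 < ω₀)
    (hroot : ω₀ ^ 4 + p ^ 2 * ω₀ ^ 2 - C ^ 2 = 0)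
    (τ : ℝ) (hτ0 : 0 ≤ τ) (hτ : τ < Real.arccos (ω₀ ^ 2 / C) / ω₀) :
    ∀ z : ℂ, z ^ 2 + (p : ℂ) * z + (C : ℂ) * Complex.exp (-z * (τ : ℂ)) = 0 →
      z.re ≠ 0 := by
  intro z hz hre
  have hz_eq : z = (z.im : ℂ) * I := Complex.ext (by simp [hre]) (by simp)
  obtain ⟨hcos, hsin⟩ := cos_sin_eq_of_root_mul_I (hz_eq ▸ hz)
  have hsq : z.im ^ 2 = ω₀ ^ 2 :=
    sq_eq_sq_of_quartic_eq (p := p) <| by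
      linear_combination quartic_eq_of_cos_sin_eq hcos hsin - hroot
  have habs : |z.im| = ω₀ := by rw [← abs_of_pos hω]; exact sq_eq_sq_iff_abs_eq_abs _ _ |>.mp hsq
  have hcos₀ : C * Real.cos (ω₀ * τ) = ω₀ ^ 2 := by
    rw [← hsq, ← hcos, ← Real.cos_abs (z.im * τ), abs_mul, habs, abs_of_nonneg hτ0]
  have hlt := Real.lt_cos_of_lt_arccos (mul_nonneg hω.le hτ0) ((lt_div_iff₀' hω).mp hτ)
  rw [div_lt_iff₀ hC] at hlt
  linarith

/-- Below the first critical delay τ₂₀ = arccos(ω₀²/C)/ω₀ the characteristic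
equation λ² + pλ + C e^{−λτ} = 0 has no root on the imaginary axis. -/
theorem stmt_11 (p C ω₀ : ℝ) (hp : 0 < p) (hC : 0 < C) (hω : 0 < ω₀)
    (hroot : ω₀ ^ 4 + p ^ 2 * ω₀ ^ 2 - C ^ 2 = 0)
    (τ : ℝ) (hτ0 : 0 ≤ τ) (hτ : τ < Real.arccos (ω₀ ^ 2 / C) / ω₀) :
    ∀ z : ℂ, z ^ 2 + (p : ℂ) * z + (C : ℂ) * Complex.exp (-z * (τ : ℂ)) = 0 →
      z.re ≠ 0 :=
  stmt_11_general p C ω₀ hC hω hroot τ hτ0 hτ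
end

section
/- Let p, C, τ be real numbers with p > 0, τ ≥ 0, and let ω > 0 satisfy C·e^{−iωτ} = ω² − i·pω (equivalently λ = iω is a root of λ² + pλ + C e^{−λτ} = 0). Then the derivative in λ of the characteristic function at this root, namely 2(iω) + p − Cτ·e^{−iωτ}, is nonzero; indeed its imaginary part equals ω(2 + τp) > 0. -/
/-!
At a root `iω` the delayed term can be eliminated: `C e^{-iωτ} = ω² - ipω`, so the
`λ`-derivative `2iω + p - τ · C e^{-iωτ}` equals `2iω + p - τ(ω² - ipω)`, whose imaginary
part `ω(2 + τp)` is positive.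
-/

open Complex

lemma im_two_mul_I_mul_add_sub_mul (p τ ω : ℝ) :
    (2 * (I * ω) + p - τ * ((ω ^ 2 : ℝ) - I * (p * ω : ℝ))).im = ω * (2 + τ * p) := by
  simp only [sub_im, add_im, mul_im, re_ofNat, im_ofNat, I_re, I_im, ofReal_re, ofReal_im]
  ring

/-- Nondegeneracy of the characteristic function at a purely imaginary root:
the λ-derivative 2iω + p − Cτe^{−iωτ} is nonzero, its imaginary part being ω(2+τp) > 0. -/
theorem stmt_12 (p C τ ω : ℝ) (hp : 0 < p) (hτ : 0 ≤ τ) (hω : 0 < ω)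
    (heq : (C : ℂ) * Complex.exp (-(Complex.I * (ω : ℂ)) * (τ : ℂ)) =
        ((ω ^ 2 : ℝ) : ℂ) - Complex.I * ((p * ω : ℝ) : ℂ)) :
    (2 * (Complex.I * (ω : ℂ)) + (p : ℂ) -
        (C : ℂ) * (τ : ℂ) * Complex.exp (-(Complex.I * (ω : ℂ)) * (τ : ℂ))) ≠ 0 ∧
    (2 * (Complex.I * (ω : ℂ)) + (p : ℂ) -
        (C : ℂ) * (τ : ℂ) * Complex.exp (-(Complex.I * (ω : ℂ)) * (τ : ℂ))).im =
      ω * (2 + τ * p) ∧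
    0 < ω * (2 + τ * p) := by
  have hdelay : (C : ℂ) * τ * exp (-(I * ω) * τ) = τ * ((ω ^ 2 : ℝ) - I * (p * ω : ℝ)) := by
    rw [mul_right_comm, heq, mul_comm]
  have him := im_two_mul_I_mul_add_sub_mul p τ ω
  rw [← hdelay] at him
  have hpos : 0 < ω * (2 + τ * p) := by positivity
  exact ⟨ne_of_apply_ne im (by rw [him, zero_im]; exact hpos.ne'), him, hpos⟩
end

section
/- Let p, C, τ be real numbers with C ≠ 0, and let ω > 0 satisfy ω⁴ + p²ω² = C² and C·e^{−iωτ} = ω² − i·pω. Then Re( (2iω + p)·e^{iωτ}/(iωC) − τ/(iω) ) = (2ω² + p²)/C², which is strictly positive. (This is the transversality quantity [d Re λ/dτ]^{−1} at the purely imaginary root, showing the root crosses the imaginary axis from left to right.) -/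
/-- Transversality at the purely imaginary root: the real part of
(2iω+p)e^{iωτ}/(iωC) − τ/(iω) equals (2ω²+p²)/C², which is positive. -/
theorem stmt_13 (p C τ ω : ℝ) (hω : 0 < ω)
    (hroot : ω ^ 4 + p ^ 2 * ω ^ 2 = C ^ 2)
    (heq : (C : ℂ) * Complex.exp (-(Complex.I * (ω : ℂ)) * (τ : ℂ)) =
        ((ω ^ 2 : ℝ) : ℂ) - Complex.I * ((p * ω : ℝ) : ℂ)) :
    ((2 * (Complex.I * (ω : ℂ)) + (p : ℂ)) *
          Complex.exp ((Complex.I * (ω : ℂ)) * (τ : ℂ)) / ((Complex.I * (ω : ℂ)) * (C : ℂ)) -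
        (τ : ℂ) / (Complex.I * (ω : ℂ))).re = (2 * ω ^ 2 + p ^ 2) / C ^ 2 ∧
    0 < (2 * ω ^ 2 + p ^ 2) / C ^ 2 := by
  have hω0 : ω ≠ 0 := ne_of_gt hω
  have hC2 : 0 < C ^ 2 := by rw [← hroot]; positivity
  have hC : C ≠ 0 := by intro h; rw [h] at hC2; simp at hC2
  have hωC : (ω : ℂ) ≠ 0 := by exact_mod_cast hω0
  have hCC : (C : ℂ) ≠ 0 := by exact_mod_cast hC
  have hroot' : ((ω : ℂ)) ^ 4 + (p : ℂ) ^ 2 * (ω : ℂ) ^ 2 = (C : ℂ) ^ 2 := by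
    exact_mod_cast hroot
  have h1 : Complex.exp ((Complex.I * (ω : ℂ)) * (τ : ℂ)) *
      Complex.exp (-(Complex.I * (ω : ℂ)) * (τ : ℂ)) = 1 := by
    rw [← Complex.exp_add,
      show (Complex.I * (ω : ℂ)) * (τ : ℂ) + -(Complex.I * (ω : ℂ)) * (τ : ℂ) = 0 by ring,
      Complex.exp_zero]
  have hzd : Complex.exp ((Complex.I * (ω : ℂ)) * (τ : ℂ)) *
      (((ω ^ 2 : ℝ) : ℂ) - Complex.I * ((p * ω : ℝ) : ℂ)) = (C : ℂ) := by
    rw [← heq]; linear_combination (C : ℂ) * h1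
  set z := Complex.exp ((Complex.I * (ω : ℂ)) * (τ : ℂ)) with hzdef
  have hz2 : z * (C : ℂ) = (ω : ℂ) ^ 2 + Complex.I * ((p : ℂ) * (ω : ℂ)) := by
    apply mul_right_cancel₀ hCC
    push_cast at hzd
    linear_combination ((ω:ℂ)^2 + Complex.I*(p:ℂ)*(ω:ℂ)) * hzd - z * hroot' +
      z * (p:ℂ)^2 * (ω:ℂ)^2 * Complex.I_sq
  have hz3 : z = ((ω : ℂ) ^ 2 + Complex.I * ((p : ℂ) * (ω : ℂ))) / (C : ℂ) :=
    (eq_div_iff hCC).mpr hz2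
  have hmain : (2 * (Complex.I * (ω : ℂ)) + (p : ℂ)) *
          z / ((Complex.I * (ω : ℂ)) * (C : ℂ)) -
        (τ : ℂ) / (Complex.I * (ω : ℂ)) =
      (((2 * ω ^ 2 + p ^ 2) / C ^ 2 : ℝ) : ℂ) +
      (((p * ω / C ^ 2 + τ / ω : ℝ)) : ℂ) * Complex.I := by
    rw [hz3]
    push_cast
    field_simp [Complex.I_ne_zero]
    linear_combination ((ω:ℂ)^2 * (p:ℂ) - (C:ℂ)^2 * (τ:ℂ)) * Complex.I_sq
  refine ⟨?_, div_pos (by positivity) hC2⟩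
  rw [hmain]
  simp only [Complex.add_re, Complex.mul_re, Complex.ofReal_re, Complex.ofReal_im,
    Complex.I_re, Complex.I_im]
  ring
end

section
/- Let A, B, C, τ₁, τ₂ be real numbers and let ω > 0 satisfy (iω)² + A(iω) + B(iω)e^{−iωτ₁} + C e^{−iωτ₂} = 0. Then ω⁴ + (A² − B²)ω² + C² − 2Cω²·cos(ωτ₂) − 2ACω·sin(ωτ₂) = 0. -/
open Complex

/-
Move the τ₁-term to one side, `Bωi·e^{-iωτ₁} = -((iω)² + Aiω + C e^{-iωτ₂})`, and take squared
moduli: the left side has modulus `B²ω²` whatever τ₁ is, and expanding the right side gives the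
polynomial in `ω`, `cos (ωτ₂)`, `sin (ωτ₂)` of the statement.
-/

lemma exp_neg_I_mul_ofReal_mul (ω τ : ℝ) :
    exp (-(I * ω) * τ) = Real.cos (ω * τ) - Real.sin (ω * τ) * I := by
  have : -(I * ω) * τ = ((-(ω * τ) : ℝ) : ℂ) * I := by push_cast; ring
  rw [this, exp_mul_I, ← ofReal_cos, ← ofReal_sin, Real.cos_neg, Real.sin_neg]
  push_cast
  ring

lemma normSq_mul_I_mul_exp_neg_I_mul (B ω τ : ℝ) :
    normSq (B * (I * ω) * exp (-(I * ω) * τ)) = B ^ 2 * ω ^ 2 := by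
  rw [exp_neg_I_mul_ofReal_mul, normSq_mul, normSq_mul, normSq_ofReal, normSq_mul, normSq_I,
    normSq_ofReal, normSq_apply]
  simp only [sub_re, sub_im, ofReal_re, ofReal_im, mul_re, mul_im, I_re, I_im]
  linear_combination B ^ 2 * ω ^ 2 * Real.sin_sq_add_cos_sq (ω * τ)

lemma normSq_sq_add_mul_add_mul_exp_neg_I_mul (A C ω τ : ℝ) :
    normSq ((I * ω) ^ 2 + A * (I * ω) + C * exp (-(I * ω) * τ)) =
      ω ^ 4 + A ^ 2 * ω ^ 2 + C ^ 2 - 2 * C * ω ^ 2 * Real.cos (ω * τ) -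
        2 * A * C * ω * Real.sin (ω * τ) := by
  rw [exp_neg_I_mul_ofReal_mul, normSq_apply]
  simp only [add_re, add_im, sub_re, sub_im, mul_re, mul_im, sq, ofReal_re, ofReal_im, I_re, I_im]
  linear_combination C ^ 2 * Real.sin_sq_add_cos_sq (ω * τ)

theorem stmt_14_general (A B C τ₁ τ₂ ω : ℝ)
    (heq : (Complex.I * (ω : ℂ)) ^ 2 + (A : ℂ) * (Complex.I * (ω : ℂ)) +
        (B : ℂ) * (Complex.I * (ω : ℂ)) * Complex.exp (-(Complex.I * (ω : ℂ)) * (τ₁ : ℂ)) +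
        (C : ℂ) * Complex.exp (-(Complex.I * (ω : ℂ)) * (τ₂ : ℂ)) = 0) :
    ω ^ 4 + (A ^ 2 - B ^ 2) * ω ^ 2 + C ^ 2 - 2 * C * ω ^ 2 * Real.cos (ω * τ₂) -
      2 * A * C * ω * Real.sin (ω * τ₂) = 0 := by
  have hτ₁ : B * (I * ω) * exp (-(I * ω) * τ₁) =
      -((I * ω) ^ 2 + A * (I * ω) + C * exp (-(I * ω) * τ₂)) := by
    linear_combination heq
  have hnorm := congrArg normSq hτ₁
  rw [normSq_neg, normSq_mul_I_mul_exp_neg_I_mul,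
    normSq_sq_add_mul_add_mul_exp_neg_I_mul] at hnorm
  linear_combination -hnorm

/-- Eliminating τ₁ from a purely imaginary root of the two-delay characteristic
equation yields equation (2.7). -/
theorem stmt_14 (A B C τ₁ τ₂ ω : ℝ) (hω : 0 < ω)
    (heq : (Complex.I * (ω : ℂ)) ^ 2 + (A : ℂ) * (Complex.I * (ω : ℂ)) +
        (B : ℂ) * (Complex.I * (ω : ℂ)) * Complex.exp (-(Complex.I * (ω : ℂ)) * (τ₁ : ℂ)) +
        (C : ℂ) * Complex.exp (-(Complex.I * (ω : ℂ)) * (τ₂ : ℂ)) = 0) :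
    ω ^ 4 + (A ^ 2 - B ^ 2) * ω ^ 2 + C ^ 2 - 2 * C * ω ^ 2 * Real.cos (ω * τ₂) -
      2 * A * C * ω * Real.sin (ω * τ₂) = 0 :=
  stmt_14_general A B C τ₁ τ₂ ω heq
end

section
/- Let A, B, C, τ₁, τ₂ be real numbers with C ≠ 0, and let ω > 0 satisfy (iω)² + A(iω) + B(iω)e^{−iωτ₁} + C e^{−iωτ₂} = 0. Then ω⁴ + (A² + B²)ω² − C² − 2Bω³·sin(ωτ₁) + 2ABω²·cos(ωτ₁) = 0 and cos(ωτ₂) = (ω² − Bω·sin(ωτ₁))/C. -/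
/-!
At `λ = iω` the two sides of the characteristic equation split into
`C cos(ωτ₂) = ω² − Bω sin(ωτ₁)` and `C sin(ωτ₂) = Aω + Bω cos(ωτ₁)`.
The first is the formula for `cos(ωτ₂)`; squaring and adding both eliminates `τ₂`
through `sin² + cos² = 1`.
-/

open Complex in
theorem mul_cos_and_mul_sin_of_charEq_I_mul {A B C τ₁ τ₂ ω : ℝ}
    (heq : (I * (ω : ℂ)) ^ 2 + (A : ℂ) * (I * (ω : ℂ)) +
        (B : ℂ) * (I * (ω : ℂ)) * exp (-(I * (ω : ℂ)) * (τ₁ : ℂ)) +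
        (C : ℂ) * exp (-(I * (ω : ℂ)) * (τ₂ : ℂ)) = 0) :
    C * Real.cos (ω * τ₂) = ω ^ 2 - B * ω * Real.sin (ω * τ₁) ∧
      C * Real.sin (ω * τ₂) = A * ω + B * ω * Real.cos (ω * τ₁) := by
  have hexp (τ : ℝ) : exp (-(I * (ω : ℂ)) * (τ : ℂ)) =
      (Real.cos (ω * τ) : ℂ) - (Real.sin (ω * τ) : ℂ) * I := by
    rw [show -(I * (ω : ℂ)) * (τ : ℂ) = ((-(ω * τ) : ℝ) : ℂ) * I by push_cast; ring,
      exp_mul_I, ← ofReal_cos, ← ofReal_sin, Real.cos_neg, Real.sin_neg]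
    push_cast
    ring
  rw [hexp, hexp] at heq
  have hre := congrArg re heq
  have him := congrArg im heq
  simp only [add_re, add_im, mul_re, mul_im, sub_re, sub_im, sq, I_re, I_im, ofReal_re,
    ofReal_im, zero_re, zero_im] at hre him
  constructor <;> linarith

theorem sq_add_sq_of_mul_cos_of_mul_sin {C θ x y : ℝ} (hx : C * Real.cos θ = x)
    (hy : C * Real.sin θ = y) : x ^ 2 + y ^ 2 = C ^ 2 := by
  rw [← hx, ← hy]
  linear_combination C ^ 2 * Real.cos_sq_add_sin_sq θ

theorem stmt_18_general (A B C τ₁ τ₂ ω : ℝ) (hC : C ≠ 0)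
    (heq : (Complex.I * (ω : ℂ)) ^ 2 + (A : ℂ) * (Complex.I * (ω : ℂ)) +
        (B : ℂ) * (Complex.I * (ω : ℂ)) * Complex.exp (-(Complex.I * (ω : ℂ)) * (τ₁ : ℂ)) +
        (C : ℂ) * Complex.exp (-(Complex.I * (ω : ℂ)) * (τ₂ : ℂ)) = 0) :
    ω ^ 4 + (A ^ 2 + B ^ 2) * ω ^ 2 - C ^ 2 - 2 * B * ω ^ 3 * Real.sin (ω * τ₁) +
      2 * A * B * ω ^ 2 * Real.cos (ω * τ₁) = 0 ∧
    Real.cos (ω * τ₂) = (ω ^ 2 - B * ω * Real.sin (ω * τ₁)) / C := by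
  obtain ⟨hcos, hsin⟩ := mul_cos_and_mul_sin_of_charEq_I_mul heq
  refine ⟨?_, eq_div_of_mul_eq hC (by rw [mul_comm, hcos])⟩
  linear_combination sq_add_sq_of_mul_cos_of_mul_sin hcos hsin -
    B ^ 2 * ω ^ 2 * Real.sin_sq_add_cos_sq (ω * τ₁)

/-- Eliminating τ₂ from a purely imaginary root of the two-delay characteristic
equation (Case V) yields the stated equation and cos(ωτ₂) = (ω² − Bω sin(ωτ₁))/C. -/
theorem stmt_18 (A B C τ₁ τ₂ ω : ℝ) (hC : C ≠ 0) (hω : 0 < ω)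
    (heq : (Complex.I * (ω : ℂ)) ^ 2 + (A : ℂ) * (Complex.I * (ω : ℂ)) +
        (B : ℂ) * (Complex.I * (ω : ℂ)) * Complex.exp (-(Complex.I * (ω : ℂ)) * (τ₁ : ℂ)) +
        (C : ℂ) * Complex.exp (-(Complex.I * (ω : ℂ)) * (τ₂ : ℂ)) = 0) :
    ω ^ 4 + (A ^ 2 + B ^ 2) * ω ^ 2 - C ^ 2 - 2 * B * ω ^ 3 * Real.sin (ω * τ₁) +
      2 * A * B * ω ^ 2 * Real.cos (ω * τ₁) = 0 ∧
    Real.cos (ω * τ₂) = (ω ^ 2 - B * ω * Real.sin (ω * τ₁)) / C :=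
  stmt_18_general A B C τ₁ τ₂ ω hC heq
end
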